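/- Let M be a model category and let S ⊆ T be two classes of maps such that the left Bousfield localizations M/S and M/T exist. If every S-fibration between S-fibrant objects that is a T-equivalence is also an S-equivalence, then the model structures M/S and M/T coincide; equivalently, every T-equivalence is an S-equivalence. -/
import Mathlib


open CategoryTheory CategoryTheory.Limits

universe v u

/-- A (data-level) model structure on a category `M`. -/
structure ModelStructure (M : Type u) [Category.{v} M] where
  W : MorphismProperty M
  Cof : MorphismProperty M
  Fib : MorphismProperty M
  W_id : ∀ X : M, W (𝟙 X)
  W_comp : ∀ {X Y Z : M} (f : X ⟶ Y) (g : Y ⟶ Z), W f → W g → W (f ≫ g)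
  W_cancel_left : ∀ {X Y Z : M} (f : X ⟶ Y) (g : Y ⟶ Z), W f → W (f ≫ g) → W g
  W_cancel_right : ∀ {X Y Z : M} (f : X ⟶ Y) (g : Y ⟶ Z), W g → W (f ≫ g) → W f
  lift_cof_trivFib : ∀ {A B X Y : M} (i : A ⟶ B) (p : X ⟶ Y),
    Cof i → Fib p → W p → HasLiftingProperty i p
  lift_trivCof_fib : ∀ {A B X Y : M} (i : A ⟶ B) (p : X ⟶ Y),
    Cof i → W i → Fib p → HasLiftingProperty i p
  factor_cof_trivFib : ∀ {X Y : M} (f : X ⟶ Y),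
    ∃ (Z : M) (i : X ⟶ Z) (p : Z ⟶ Y), Cof i ∧ Fib p ∧ W p ∧ i ≫ p = f
  factor_trivCof_fib : ∀ {X Y : M} (f : X ⟶ Y),
    ∃ (Z : M) (i : X ⟶ Z) (p : Z ⟶ Y), Cof i ∧ W i ∧ Fib p ∧ i ≫ p = f
  fib_iff_rlp : ∀ {X Y : M} (p : X ⟶ Y),
    Fib p ↔ ∀ {A B : M} (i : A ⟶ B), Cof i → W i → HasLiftingProperty i p
  cof_iff_llp : ∀ {A B : M} (i : A ⟶ B),
    Cof i ↔ ∀ {X Y : M} (p : X ⟶ Y), Fib p → W p → HasLiftingProperty i p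

variable {M : Type u} [Category.{v} M] [HasTerminal M]

/-- An object is fibrant for a model structure if the map to the terminal object
is a fibration. -/
def ModelStructure.Fibrant (S : ModelStructure M) (X : M) : Prop :=
  S.Fib (terminal.from X)

/-- Let `M` be a model category and let `S ⊆ T` be two classes of maps
such that the left Bousfield localizations `M/S` and `M/T` exist.  (A left Bousfield
localization has the same cofibrations as `M`; since `S ⊆ T`, every `S`-equivalence is a
`T`-equivalence.)  If every `S`-fibration between `S`-fibrant objects that is a
`T`-equivalence is also an `S`-equivalence, then the model structures `M/S` and `M/T`
coincide: every `T`-equivalence is an `S`-equivalence and the `S`- and `T`-fibrations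
agree. -/
theorem bousfield_localizations_coincide
    (MS MT : ModelStructure M)
    -- the two localizations have the same cofibrations (those of `M`)
    (hcof : MS.Cof = MT.Cof)
    -- since `S ⊆ T`, every `S`-equivalence is a `T`-equivalence
    (hWle : ∀ {X Y : M} (f : X ⟶ Y), MS.W f → MT.W f)
    -- hypothesis: `S`-fibrations between `S`-fibrant objects which are `T`-equivalences
    -- are `S`-equivalences
    (hmain : ∀ {X Y : M} (f : X ⟶ Y), MS.Fib f → MS.Fibrant X → MS.Fibrant Y →
      MT.W f → MS.W f) :
    (∀ {X Y : M} (f : X ⟶ Y), MT.W f ↔ MS.W f) ∧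
    (∀ {X Y : M} (f : X ⟶ Y), MT.Fib f ↔ MS.Fib f) := by
  -- fibrations are closed under composition
  have fib_comp : ∀ {X Y Z : M} (p : X ⟶ Y) (q : Y ⟶ Z),
      MS.Fib p → MS.Fib q → MS.Fib (p ≫ q) := by
    intro X Y Z p q hp hq
    rw [MS.fib_iff_rlp] at hp hq ⊢
    intro A B i hc hw
    have := hp i hc hw
    have := hq i hc hw
    infer_instance
  have key : ∀ {X Y : M} (f : X ⟶ Y), MT.W f → MS.W f := by
    intro X Y f hf
    obtain ⟨X', iX, pX, hcX, hwX, hfX, hX⟩ := MS.factor_trivCof_fib (terminal.from X)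
    obtain ⟨Y', iY, pY, hcY, hwY, hfY, hY⟩ := MS.factor_trivCof_fib (terminal.from Y)
    have hfibX' : MS.Fibrant X' := by
      have h : terminal.from X' = pX := Subsingleton.elim _ _
      rw [ModelStructure.Fibrant, h]; exact hfX
    have hfibY' : MS.Fibrant Y' := by
      have h : terminal.from Y' = pY := Subsingleton.elim _ _
      rw [ModelStructure.Fibrant, h]; exact hfY
    have : HasLiftingProperty iX (terminal.from Y') :=
      MS.lift_trivCof_fib _ _ hcX hwX hfibY'
    have sq : CommSq (f ≫ iY) iX (terminal.from Y') (terminal.from X') :=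
      ⟨Subsingleton.elim _ _⟩
    obtain ⟨l, hl1⟩ : ∃ l : X' ⟶ Y', iX ≫ l = f ≫ iY := ⟨sq.lift, sq.fac_left⟩
    have hWTl : MT.W l := by
      have h1 : MT.W (iX ≫ l) := by
        rw [hl1]; exact MT.W_comp _ _ hf (hWle _ hwY)
      exact MT.W_cancel_left _ _ (hWle _ hwX) h1
    obtain ⟨Z, j, q, hcj, hwj, hfq, hjq⟩ := MS.factor_trivCof_fib l
    have hfibZ : MS.Fibrant Z := by
      have h : terminal.from Z = q ≫ terminal.from Y' := Subsingleton.elim _ _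
      rw [ModelStructure.Fibrant, h]
      exact fib_comp _ _ hfq hfibY'
    have hWTq : MT.W q := by
      have h1 : MT.W (j ≫ q) := by rw [hjq]; exact hWTl
      exact MT.W_cancel_left _ _ (hWle _ hwj) h1
    have hWSq : MS.W q := hmain q hfq hfibZ hfibY' hWTq
    have hWSl : MS.W l := by rw [← hjq]; exact MS.W_comp _ _ hwj hWSq
    have h1 : MS.W (f ≫ iY) := by
      rw [← hl1]; exact MS.W_comp _ _ hwX hWSl
    exact MS.W_cancel_right _ _ hwY h1
  constructor
  · intro X Y f
    exact ⟨key f, hWle f⟩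
  · intro X Y p
    rw [MS.fib_iff_rlp, MT.fib_iff_rlp]
    constructor
    · intro h A B i hc hw
      exact h i (hcof ▸ hc) (hWle _ hw)
    · intro h A B i hc hw
      exact h i (hcof ▸ hc) (key _ hw)
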